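/- Let k be a field, A a finite-dimensional k-algebra, and 0 → M₁ → M → M₂ → 0 a short exact sequence of finite-dimensional A-modules. Let N be a finite-dimensional A-module and suppose that M₁ and M₂ have no composition factor in common, that Hom_A(M₂, N) and Hom_A(M₁, N) are each at most one-dimensional, and that the simple socle of N (assumed simple) is a composition factor of at most one of M₁, M₂. Then dim_k Hom_A(M, N) ≤ 1. -/
import Mathlib


/-- The subquotient `q / p` of a module, for submodules `p`, `q` (meaningful when `p ≤ q`). -/
abbrev subquot {R M : Type*} [Ring R] [AddCommGroup M] [Module R M]
    (p q : Submodule R M) :=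
  q ⧸ Submodule.comap q.subtype p

/-- Two modules have a common composition factor if some simple module occurs as a
subquotient of both. -/
def HasCommonCompositionFactor (R M N : Type*) [Ring R]
    [AddCommGroup M] [Module R M] [AddCommGroup N] [Module R N] : Prop :=
  ∃ (pM qM : Submodule R M) (pN qN : Submodule R N),
    pM ≤ qM ∧ pN ≤ qN ∧ IsSimpleModule R (subquot pM qM) ∧
      Nonempty ((subquot pM qM) ≃ₗ[R] (subquot pN qN))

/-- `S` occurs as a composition factor (simple subquotient) of `N`. -/
def IsCompositionFactor (R : Type*) [Ring R] (S N : Type*)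
    [AddCommGroup S] [Module R S] [AddCommGroup N] [Module R N] : Prop :=
  ∃ p q : Submodule R N, p ≤ q ∧ Nonempty (subquot p q ≃ₗ[R] S)

/-- The socle of a module: the sum of all its simple submodules. -/
def moduleSocle (R N : Type*) [Ring R] [AddCommGroup N] [Module R N] :
    Submodule R N :=
  sSup {m : Submodule R N | IsSimpleModule R ↥m}

lemma socle_le_of_ne_bot {A N : Type*} [Ring A] [AddCommGroup N] [Module A N]
    [IsArtinian A N] (hsoc : IsSimpleModule A ↥(moduleSocle A N))
    (P : Submodule A N) (hP : P ≠ ⊥) : moduleSocle A N ≤ P := by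
  obtain ⟨a, ha, haP⟩ := (eq_bot_or_exists_atom_le P).resolve_left hP
  have hsimp : IsSimpleModule A ↥a := (isSimpleModule_iff_isAtom).mpr ha
  have hle : a ≤ moduleSocle A N := le_sSup hsimp
  have hatom : IsAtom (moduleSocle A N) := (isSimpleModule_iff_isAtom).mp hsoc
  rcases lt_or_eq_of_le hle with h | h
  · exact absurd (hatom.2 _ h) ha.1
  · rw [← h]; exact haP

lemma socle_isCompositionFactor {A X N : Type*} [Ring A]
    [AddCommGroup X] [Module A X] [AddCommGroup N] [Module A N] [IsArtinian A N]
    (hsoc : IsSimpleModule A ↥(moduleSocle A N)) (φ : X →ₗ[A] N) (hφ : φ ≠ 0) :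
    IsCompositionFactor A ↥(moduleSocle A N) X := by
  have hrange : LinearMap.range φ ≠ ⊥ := by
    simpa [LinearMap.range_eq_bot] using hφ
  have hsle : moduleSocle A N ≤ LinearMap.range φ :=
    socle_le_of_ne_bot hsoc _ hrange
  set q : Submodule A X := Submodule.comap φ (moduleSocle A N) with hq
  have hpq : LinearMap.ker φ ≤ q := fun x hx => by
    simp [hq, Submodule.mem_comap, LinearMap.mem_ker.mp hx]
  have hres : ∀ x ∈ q, φ x ∈ moduleSocle A N := fun x hx => hx
  set ψ : q →ₗ[A] ↥(moduleSocle A N) := φ.restrict hres with hψ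
  have hsurj : Function.Surjective ψ := by
    rintro ⟨s, hs⟩
    obtain ⟨x, hx⟩ := hsle hs
    refine ⟨⟨x, ?_⟩, ?_⟩
    · simp [hq, Submodule.mem_comap, hx, hs]
    · ext; simpa [hψ, LinearMap.restrict_apply] using hx
  have e := ψ.quotKerEquivOfSurjective hsurj
  rw [hψ, LinearMap.ker_restrict hres] at e
  exact ⟨LinearMap.ker φ, q, hpq, ⟨e⟩⟩

lemma rank_le_one_of_injective {k X Y : Type*} [Field k]
    [AddCommGroup X] [Module k X] [AddCommGroup Y] [Module k Y]
    (f : X →ₗ[k] Y) (hf : Function.Injective f)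
    (h : Module.rank k Y ≤ 1) : Module.rank k X ≤ 1 := by
  obtain ⟨v₀, hv⟩ := rank_le_one_iff.1 h
  rcases subsingleton_or_nontrivial X with hX | hX
  · rw [rank_subsingleton' k X]; exact zero_le_one
  · obtain ⟨x₀, hx₀⟩ := exists_ne (0 : X)
    refine rank_le_one_iff.2 ⟨x₀, fun x => ?_⟩
    obtain ⟨r₀, hr₀⟩ := hv (f x₀)
    obtain ⟨r, hr⟩ := hv (f x)
    have hr₀0 : r₀ ≠ 0 := by
      rintro rfl
      rw [zero_smul] at hr₀
      exact hx₀ (hf (hr₀.symm.trans f.map_zero.symm))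
    refine ⟨r / r₀, hf ?_⟩
    rw [map_smul, ← hr₀, ← hr, smul_smul, div_mul_cancel₀ _ hr₀0]

lemma rank_le_one_of_surjective {k X Y : Type*} [Field k]
    [AddCommGroup X] [Module k X] [AddCommGroup Y] [Module k Y]
    (f : X →ₗ[k] Y) (hf : Function.Surjective f)
    (h : Module.rank k X ≤ 1) : Module.rank k Y ≤ 1 := by
  obtain ⟨x₀, hx⟩ := rank_le_one_iff.1 h
  refine rank_le_one_iff.2 ⟨f x₀, fun y => ?_⟩
  obtain ⟨x, rfl⟩ := hf y
  obtain ⟨r, hr⟩ := hx x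
  exact ⟨r, by rw [← map_smul, hr]⟩


/-- Let `A` be a finite-dimensional algebra over a field `k` and
`0 → M₁ → M → M₂ → 0` a short exact sequence of finite-dimensional `A`-modules.
Let `N` be a finite-dimensional `A`-module with simple socle, and suppose that `M₁` and
`M₂` have no composition factor in common, that `Hom_A(M₂, N)` and `Hom_A(M₁, N)` are
each at most one-dimensional, and that the socle of `N` is a composition factor of at
most one of `M₁`, `M₂`.  Then `dim_k Hom_A(M, N) ≤ 1`. -/
theorem hom_dim_le_one_of_ses
    {k A M₁ M M₂ N : Type*} [Field k] [Ring A] [Algebra k A] [FiniteDimensional k A]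
    [AddCommGroup M₁] [Module A M₁] [Module k M₁] [IsScalarTower k A M₁]
    [FiniteDimensional k M₁]
    [AddCommGroup M] [Module A M] [Module k M] [IsScalarTower k A M]
    [FiniteDimensional k M]
    [AddCommGroup M₂] [Module A M₂] [Module k M₂] [IsScalarTower k A M₂]
    [FiniteDimensional k M₂]
    [AddCommGroup N] [Module A N] [Module k N] [IsScalarTower k A N]
    [SMulCommClass A k N] [FiniteDimensional k N]
    (f : M₁ →ₗ[A] M) (g : M →ₗ[A] M₂)
    (hf : Function.Injective f) (hg : Function.Surjective g)
    (hfg : LinearMap.range f = LinearMap.ker g)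
    (hsoc : IsSimpleModule A ↥(moduleSocle A N))
    (hnc : ¬ HasCommonCompositionFactor A M₁ M₂)
    (h₂ : Module.rank k (M₂ →ₗ[A] N) ≤ 1)
    (h₁ : Module.rank k (M₁ →ₗ[A] N) ≤ 1)
    (hone : ¬ (IsCompositionFactor A ↥(moduleSocle A N) M₁ ∧
               IsCompositionFactor A ↥(moduleSocle A N) M₂)) :
    Module.rank k (M →ₗ[A] N) ≤ 1 := by
  
  have hart : IsArtinian A N := isArtinian_of_tower k inferInstance
  let res : (M →ₗ[A] N) →ₗ[k] (M₁ →ₗ[A] N) :=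
    { toFun := fun φ => φ.comp f
      map_add' := fun φ ψ => by ext x; simp
      map_smul' := fun c φ => by ext x; simp }
  let π : (M₂ →ₗ[A] N) →ₗ[k] (M →ₗ[A] N) :=
    { toFun := fun ψ => ψ.comp g
      map_add' := fun φ ψ => by ext x; simp
      map_smul' := fun c φ => by ext x; simp }
  have hπinj : Function.Injective π := by
    intro ψ₁ ψ₂ h
    ext y
    obtain ⟨x, rfl⟩ := hg y
    exact DFunLike.congr_fun (congrArg (fun (t : M →ₗ[A] N) => t) h) x
  have factor : ∀ φ : M →ₗ[A] N, φ.comp f = 0 → ∃ ψ : M₂ →ₗ[A] N, ψ.comp g = φ := by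
    intro φ h0
    have hker : LinearMap.ker g ≤ LinearMap.ker φ := by
      rw [← hfg]
      rintro _ ⟨x, rfl⟩
      simpa using DFunLike.congr_fun h0 x
    refine ⟨((LinearMap.ker g).liftQ φ hker).comp
      (g.quotKerEquivOfSurjective hg).symm.toLinearMap, ?_⟩
    ext x
    have hmk : (g.quotKerEquivOfSurjective hg).symm (g x) =
        Submodule.Quotient.mk x := by
      apply (g.quotKerEquivOfSurjective hg).injective
      simp [LinearMap.quotKerEquivOfSurjective, LinearMap.quotKerEquivRange_apply_mk]
    simp [hmk]
  by_contra hcon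
  have hB : ∃ φ : M →ₗ[A] N, φ.comp f ≠ 0 := by
    by_contra hall
    push_neg at hall
    have hsurj : Function.Surjective π := fun φ => factor φ (hall φ)
    exact hcon (rank_le_one_of_surjective π hsurj h₂)
  have hK : ∃ φ : M →ₗ[A] N, φ ≠ 0 ∧ φ.comp f = 0 := by
    by_contra hall
    push_neg at hall
    have hinj : Function.Injective res := by
      rw [injective_iff_map_eq_zero]
      intro φ hφ
      by_contra hne
      exact hall φ hne hφ
    exact hcon (rank_le_one_of_injective res hinj h₁)
  obtain ⟨φ₀, hφ₀⟩ := hB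
  obtain ⟨χ, hχ0, hχf⟩ := hK
  obtain ⟨ψ, hψg⟩ := factor χ hχf
  have hψ0 : ψ ≠ 0 := by
    rintro rfl
    simp only [LinearMap.zero_comp] at hψg
    exact hχ0 hψg.symm
  exact hone ⟨socle_isCompositionFactor hsoc _ hφ₀,
    socle_isCompositionFactor hsoc ψ hψ0⟩
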